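/- arXiv:2402.08857 — 2 statements merged into one kernel-verified Lean document; each statement's English description precedes it below -/
import Mathlib

section
/- Let c₁, c₂ ∈ ℝ³ (Euclidean space) and r ≥ 0, and let n ∈ ℕ with n ≥ 3. Set s = ‖c₂ − c₁‖₂ / (2(n−2)). Define n spheres as follows: S̄₁ = B(c₁, r), S̄ₙ = B(c₂, r), and for m = 1,…,n−2, S̄_{m+1} = B( c₁ + ((2m−1)/(2(n−2))) (c₂ − c₁) , √(r² + s²) ). Then the capsule co( B(c₁,r) ∪ B(c₂,r) ) is contained in the union S̄₁ ∪ S̄₂ ∪ ⋯ ∪ S̄ₙ. (This is the equal-radius special case of the Spherical Forward Occupancy theorem: a capsule is covered by n overlapping spheres with equally spaced centers.) -/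
/-!
Every point `x` of the capsule lies within `r` of some point of the segment `[c₁, c₂]`. Let `α` be
the line parameter of the foot of the perpendicular from `x` to the line `c₁c₂`; by Pythagoras the
squared distance from `x` to the point of parameter `β` is `h² + (β - α)² ‖c₂ - c₁‖²`, where `h` is
the distance from `x` to the line, so it grows with `|β - α|`. If `α ≤ 0` (resp. `α ≥ 1`), the
endpoint `c₁` (resp. `c₂`) is therefore at least as close to `x` as that segment point. Otherwise
`h ≤ r`, and the parameters `(2m - 1) / (2(n - 2))` of the middle centers are spaced so that one is
within `1 / (2(n - 2))` of `α`, which puts `x` within `√(r² + s²)` of that center.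
-/

open AffineMap Metric RealInnerProductSpace Set

section Capsule

variable {E : Type*} [NormedAddCommGroup E] [NormedSpace ℝ E]

theorem dist_lineMap_lineMap_le_of_mem_Icc (p q a b : E) {t : ℝ} (ht : t ∈ Icc (0 : ℝ) 1) :
    dist (lineMap p q t) (lineMap a b t) ≤ (1 - t) * dist p a + t * dist q b := by
  simp only [lineMap_apply_module]
  calc dist ((1 - t) • p + t • q) ((1 - t) • a + t • b)
      ≤ dist ((1 - t) • p) ((1 - t) • a) + dist (t • q) (t • b) := dist_add_add_le _ _ _ _
    _ = (1 - t) * dist p a + t * dist q b := by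
      rw [dist_smul₀, dist_smul₀, Real.norm_of_nonneg (by linarith [ht.2]),
        Real.norm_of_nonneg ht.1]

theorem exists_dist_lineMap_le_of_mem_convexHull_union {a b x : E} {r : ℝ}
    (hx : x ∈ convexHull ℝ (closedBall a r ∪ closedBall b r)) :
    ∃ t ∈ Icc (0 : ℝ) 1, dist x (lineMap a b t) ≤ r := by
  rcases lt_or_ge r 0 with hr | hr
  · simp [closedBall_eq_empty.2 hr] at hx
  rw [Convex.convexHull_union (convex_closedBall _ _) (convex_closedBall _ _)
    (nonempty_closedBall.2 hr) (nonempty_closedBall.2 hr), mem_convexJoin] at hx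
  obtain ⟨p, hp, q, hq, hx⟩ := hx
  rw [segment_eq_image_lineMap] at hx
  obtain ⟨t, ht, rfl⟩ := hx
  refine ⟨t, ht, ?_⟩
  calc dist (lineMap p q t) (lineMap a b t) ≤ (1 - t) * dist p a + t * dist q b :=
        dist_lineMap_lineMap_le_of_mem_Icc p q a b ht
    _ ≤ (1 - t) * r + t * r :=
        add_le_add (mul_le_mul_of_nonneg_left (mem_closedBall.1 hp) (by linarith [ht.2]))
          (mul_le_mul_of_nonneg_left (mem_closedBall.1 hq) ht.1)
    _ = r := by ring

end Capsule

section Projection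

variable {E : Type*} [NormedAddCommGroup E] [InnerProductSpace ℝ E]

/-- Parameter of the orthogonal projection of `x` onto the line `ab` (junk value `0` if `a = b`). -/
noncomputable def lineProjParam (a b x : E) : ℝ := ⟪b - a, x - a⟫ / ‖b - a‖ ^ 2

theorem inner_sub_lineMap_lineProjParam (a b x : E) :
    ⟪x - lineMap a b (lineProjParam a b x), b - a⟫ = 0 := by
  rcases eq_or_ne b a with rfl | hab
  · simp
  have hne : ‖b - a‖ ≠ 0 := norm_ne_zero_iff.2 (sub_ne_zero.2 hab)
  rw [lineMap_apply_module', lineProjParam, show ∀ c : ℝ, x - (c • (b - a) + a) =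
    (x - a) - c • (b - a) from fun c => by abel, inner_sub_left, inner_smul_left,
    real_inner_self_eq_norm_sq, real_inner_comm]
  simp only [conj_trivial]
  field_simp
  ring

theorem dist_lineMap_sq (a b x : E) (β : ℝ) :
    dist x (lineMap a b β) ^ 2 =
      dist x (lineMap a b (lineProjParam a b x)) ^ 2 +
        (β - lineProjParam a b x) ^ 2 * dist a b ^ 2 := by
  set α := lineProjParam a b x
  have hdecomp : x - lineMap a b β = (x - lineMap a b α) + (α - β) • (b - a) := by
    simp only [lineMap_apply_module']
    module
  rw [dist_eq_norm, dist_eq_norm, dist_eq_norm', hdecomp, norm_add_sq_real, inner_smul_right,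
    inner_sub_lineMap_lineProjParam, norm_smul, Real.norm_eq_abs, mul_pow, sq_abs]
  ring

theorem dist_lineMap_sq_le (a b x : E) (β γ : ℝ) :
    dist x (lineMap a b β) ^ 2 ≤
      dist x (lineMap a b γ) ^ 2 + (β - lineProjParam a b x) ^ 2 * dist a b ^ 2 := by
  rw [dist_lineMap_sq a b x β, dist_lineMap_sq a b x γ]
  nlinarith [sq_nonneg (γ - lineProjParam a b x), sq_nonneg (dist a b)]

theorem dist_lineMap_le_of_abs_sub_le (a b x : E) {β γ : ℝ}
    (h : |β - lineProjParam a b x| ≤ |γ - lineProjParam a b x|) :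
    dist x (lineMap a b β) ≤ dist x (lineMap a b γ) := by
  rw [← pow_le_pow_iff_left₀ dist_nonneg dist_nonneg two_ne_zero, dist_lineMap_sq a b x β,
    dist_lineMap_sq a b x γ]
  exact (add_le_add_iff_left _).2 (mul_le_mul_of_nonneg_right (sq_le_sq.2 h) (sq_nonneg _))

theorem dist_left_le_of_lineProjParam_nonpos {a b x : E} {t r : ℝ} (hα : lineProjParam a b x ≤ 0)
    (ht : 0 ≤ t) (hxt : dist x (lineMap a b t) ≤ r) : dist x a ≤ r := by
  simpa using (dist_lineMap_le_of_abs_sub_le a b x (β := 0)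
    (abs_le_abs (by linarith) (by linarith))).trans hxt

theorem dist_right_le_of_one_le_lineProjParam {a b x : E} {t r : ℝ}
    (hα : 1 ≤ lineProjParam a b x) (ht : t ≤ 1) (hxt : dist x (lineMap a b t) ≤ r) :
    dist x b ≤ r := by
  simpa using (dist_lineMap_le_of_abs_sub_le a b x (β := 1) (by
    rw [abs_sub_comm, abs_sub_comm t]; exact abs_le_abs (by linarith) (by linarith))).trans hxt

theorem dist_lineMap_le_sqrt {a b x : E} {t β δ r : ℝ} (hxt : dist x (lineMap a b t) ≤ r)
    (hβ : |β - lineProjParam a b x| ≤ δ) :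
    dist x (lineMap a b β) ≤ √(r ^ 2 + (δ * dist a b) ^ 2) := by
  refine Real.le_sqrt_of_sq_le ((dist_lineMap_sq_le a b x β t).trans ?_)
  rw [mul_pow]
  exact add_le_add (pow_le_pow_left₀ dist_nonneg hxt 2)
    (mul_le_mul_of_nonneg_right (sq_le_sq' (abs_le.1 hβ).1 (abs_le.1 hβ).2) (sq_nonneg _))

end Projection

theorem exists_mem_Icc_abs_sub_le {N : ℕ} (hN : 0 < N) {α : ℝ} (h0 : 0 < α) (h1 : α ≤ 1) :
    ∃ m ∈ Finset.Icc 1 N, |α - (2 * m - 1) / (2 * N)| ≤ 1 / (2 * N) := by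
  have hNpos : (0 : ℝ) < N := by exact_mod_cast hN
  set m := ⌈α * N⌉₊
  refine ⟨m, Finset.mem_Icc.2 ⟨Nat.one_le_iff_ne_zero.2 (Nat.ceil_pos.2 (by positivity)).ne',
    Nat.ceil_le.2 (by nlinarith)⟩, ?_⟩
  have hle : α * N ≤ m := Nat.le_ceil _
  have hlt : (m : ℝ) < α * N + 1 := Nat.ceil_lt_add_one (by positivity)
  have hfrac : α - (2 * m - 1) / (2 * N) = (2 * (α * N - m) + 1) / (2 * N) := by
    field_simp
    ring
  rw [hfrac, abs_div, abs_of_pos (by positivity : (0 : ℝ) < 2 * N),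
    div_le_div_iff_of_pos_right (by positivity), abs_le]
  constructor <;> linarith

theorem capsule_subset_union_spheres_general (c₁ c₂ : EuclideanSpace ℝ (Fin 3))
    (r : ℝ) (n : ℕ) (hn : 3 ≤ n) (s : ℝ)
    (hs : s = ‖c₂ - c₁‖ / (2 * ((n : ℝ) - 2))) :
    convexHull ℝ (Metric.closedBall c₁ r ∪ Metric.closedBall c₂ r) ⊆
      Metric.closedBall c₁ r ∪ Metric.closedBall c₂ r ∪
        ⋃ m ∈ Finset.Icc 1 (n - 2),
          Metric.closedBall
            (c₁ + ((2 * (m : ℝ) - 1) / (2 * ((n : ℝ) - 2))) • (c₂ - c₁))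
            (Real.sqrt (r ^ 2 + s ^ 2)) := by
  intro x hx
  obtain ⟨t, ⟨ht0, ht1⟩, hxt⟩ := exists_dist_lineMap_le_of_mem_convexHull_union hx
  rcases le_or_gt (lineProjParam c₁ c₂ x) 0 with hα0 | hα0
  · exact Or.inl (Or.inl (dist_left_le_of_lineProjParam_nonpos hα0 ht0 hxt))
  rcases le_or_gt 1 (lineProjParam c₁ c₂ x) with hα1 | hα1
  · exact Or.inl (Or.inr (dist_right_le_of_one_le_lineProjParam hα1 ht1 hxt))
  obtain ⟨m, hm, hαm⟩ := exists_mem_Icc_abs_sub_le (N := n - 2) (by omega) hα0 hα1.le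
  have hN : ((n - 2 : ℕ) : ℝ) = n - 2 := by push_cast [Nat.cast_sub (by omega : 2 ≤ n)]; ring
  rw [hN, abs_sub_comm] at hαm
  have hs' : s = 1 / (2 * ((n : ℝ) - 2)) * dist c₁ c₂ := by
    rw [hs, dist_eq_norm']
    ring
  refine Or.inr (mem_biUnion hm (mem_closedBall.2 ?_))
  rw [add_comm, ← lineMap_apply_module', hs']
  exact dist_lineMap_le_sqrt hxt hαm

/-- Equal-radius special case of the Spherical Forward Occupancy theorem:
a capsule is covered by n overlapping spheres with equally spaced centers. -/
theorem capsule_subset_union_spheres (c₁ c₂ : EuclideanSpace ℝ (Fin 3))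
    (r : ℝ) (hr : 0 ≤ r) (n : ℕ) (hn : 3 ≤ n) (s : ℝ)
    (hs : s = ‖c₂ - c₁‖ / (2 * ((n : ℝ) - 2))) :
    convexHull ℝ (Metric.closedBall c₁ r ∪ Metric.closedBall c₂ r) ⊆
      Metric.closedBall c₁ r ∪ Metric.closedBall c₂ r ∪
        ⋃ m ∈ Finset.Icc 1 (n - 2),
          Metric.closedBall
            (c₁ + ((2 * (m : ℝ) - 1) / (2 * ((n : ℝ) - 2))) • (c₂ - c₁))
            (Real.sqrt (r ^ 2 + s ^ 2)) :=
  capsule_subset_union_spheres_general c₁ c₂ r n hn s hs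
end

section
/- Let c₁, c₂ ∈ ℝ³ (Euclidean space), let r₁, r₂ ≥ 0 with ‖c₂ − c₁‖₂ ≥ |r₂ − r₁|, and let n_s ∈ ℕ with n_s ≥ 3. Set s = ‖c₂ − c₁‖₂ / (2(n_s−2)). Define n_s spheres as follows: S̄₁ = B(c₁, r₁); S̄_{n_s} = B(c₂, r₂); and for each m = 1,…,n_s−2, with λ_m = (2m−1)/(2(n_s−2)), center c̄_{m+1} = c₁ + λ_m (c₂ − c₁), perpendicular length ℓ_{m+1} = r₁ + λ_m (r₂ − r₁), and radius r̄_{m+1} = ( ℓ_{m+1}² + s² − ((r₂ − r₁)/(2(n_s−2)))² )^{1/2}, let S̄_{m+1} = B(c̄_{m+1}, r̄_{m+1}). Then the tapered capsule co( B(c₁,r₁) ∪ B(c₂,r₂) ) is contained in the union S̄₁ ∪ S̄₂ ∪ ⋯ ∪ S̄_{n_s}. (This is Theorem 1, the Spherical Forward Occupancy: the tapered capsule overapproximating a robot link is covered by n_s spheres.) -/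
/-!
For `t ∈ [0, 1]` let `c t = c₁ + t • (c₂ - c₁)` and `ℓ t = r₁ + t * (r₂ - r₁)`. Every point `x` of the
tapered capsule lies in some ball `B(c q, ℓ q)`, so the power `f t = ‖x - c t‖² - ℓ t²` of `x` with
respect to the moving ball is nonpositive at `q`. This `f` is a quadratic in `t` with leading coefficient
`A = ‖c₂ - c₁‖² - (r₂ - r₁)² ≥ 0`. If its vertex is not in `(0, 1)`, then `f` is monotone between `q` and
an endpoint, where it is therefore `≤ 0`: `x` lies in an end ball. Otherwise the vertex lies within
`1 / (2N)` (`N = n_s - 2`) of a sample parameter `λ_m = (2m - 1) / (2N)`, so `f λ_m ≤ A / (2N)²`, and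
`A / (2N)² = s² - ((r₂ - r₁) / (2N))²` is exactly the squared radius of `B̄_{m+1}` minus `ℓ λ_m²`.
-/

open Set Metric

theorem quadratic_le_of_abs_sub_vertex_le {A B C t₀ t h : ℝ} (hA : 0 < A)
    (ht₀ : A * t₀ ^ 2 + B * t₀ + C ≤ 0) (ht : |t + B / (2 * A)| ≤ h) :
    A * t ^ 2 + B * t + C ≤ A * h ^ 2 := by
  have vertex_form : ∀ u : ℝ,
      A * u ^ 2 + B * u + C = A * (u + B / (2 * A)) ^ 2 + (C - B ^ 2 / (4 * A)) := by
    intro u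
    field_simp
    ring
  have hmin : C - B ^ 2 / (4 * A) ≤ 0 := by
    nlinarith [vertex_form t₀, mul_nonneg hA.le (sq_nonneg (t₀ + B / (2 * A)))]
  have hsq : (t + B / (2 * A)) ^ 2 ≤ h ^ 2 := by
    simpa only [sq_abs] using pow_le_pow_left₀ (abs_nonneg _) ht 2
  nlinarith [vertex_form t, mul_le_mul_of_nonneg_left hsq hA.le]

theorem exists_abs_sub_le_of_mem_Ioc {N : ℕ} (hN : 0 < N) {t : ℝ} (ht : t ∈ Ioc 0 1) :
    ∃ m ∈ Finset.Icc 1 N, |(2 * (m : ℝ) - 1) / (2 * N) - t| ≤ 1 / (2 * N) := by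
  have hN' : (0 : ℝ) < N := Nat.cast_pos.mpr hN
  have htN : 0 < t * N := mul_pos ht.1 hN'
  refine ⟨⌈t * N⌉₊, Finset.mem_Icc.mpr ⟨Nat.ceil_pos.mpr htN, Nat.ceil_le.mpr ?_⟩, ?_⟩
  · nlinarith [ht.2]
  have hlow := Nat.le_ceil (t * N)
  have hhigh := Nat.ceil_lt_add_one htN.le
  rw [show (2 * (⌈t * N⌉₊ : ℝ) - 1) / (2 * N) - t = (2 * ⌈t * N⌉₊ - 1 - 2 * (t * N)) / (2 * N) by
      field_simp,
    abs_div, abs_of_pos (by positivity : (0 : ℝ) < 2 * N)]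
  gcongr
  exact abs_le.mpr ⟨by linarith, by linarith⟩

theorem quadratic_nonpos_at_endpoint_or_le_at_midpoint {f : ℝ → ℝ} {A B C q : ℝ}
    (hf : ∀ t, f t = A * t ^ 2 + B * t + C) (hA : 0 ≤ A) (hq : q ∈ Icc 0 1) (hfq : f q ≤ 0)
    {N : ℕ} (hN : 0 < N) :
    f 0 ≤ 0 ∨ f 1 ≤ 0 ∨
      ∃ m ∈ Finset.Icc 1 N, f ((2 * (m : ℝ) - 1) / (2 * N)) ≤ A * (1 / (2 * N)) ^ 2 := by
  obtain ⟨hq₀, hq₁⟩ := hq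
  rw [hf] at hfq
  by_cases hB : 0 ≤ B
  · left
    rw [hf]
    nlinarith [mul_nonneg hA (sq_nonneg q), mul_nonneg hB hq₀]
  by_cases hAB : 2 * A + B ≤ 0
  · right; left
    rw [hf]
    have : f 1 - f q = (1 - q) * (A * (1 + q) + B) := by rw [hf, hf]; ring
    nlinarith [mul_nonneg (sub_nonneg.mpr hq₁) (by nlinarith : 0 ≤ -(A * (1 + q) + B))]
  right; right
  have hA' : 0 < A := by linarith
  have hvertex : -B / (2 * A) ∈ Ioc 0 1 :=
    ⟨div_pos (by linarith) (by linarith), (div_le_one (by linarith)).mpr (by linarith)⟩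
  obtain ⟨m, hm, hclose⟩ := exists_abs_sub_le_of_mem_Ioc hN hvertex
  refine ⟨m, hm, ?_⟩
  rw [hf]
  refine quadratic_le_of_abs_sub_vertex_le hA' hfq ?_
  rwa [sub_eq_add_neg, ← neg_div, neg_neg] at hclose

section Capsule

variable {E : Type*} [NormedAddCommGroup E]

theorem exists_mem_closedBall_of_mem_convexHull_union [NormedSpace ℝ E] {c₁ c₂ x : E}
    {r₁ r₂ : ℝ} (hr₁ : 0 ≤ r₁) (hr₂ : 0 ≤ r₂)
    (hx : x ∈ convexHull ℝ (closedBall c₁ r₁ ∪ closedBall c₂ r₂)) :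
    ∃ q ∈ Icc (0 : ℝ) 1, x ∈ closedBall (c₁ + q • (c₂ - c₁)) (r₁ + q * (r₂ - r₁)) := by
  rw [convexHull_union (nonempty_closedBall.mpr hr₁) (nonempty_closedBall.mpr hr₂),
    (convex_closedBall c₁ r₁).convexHull_eq, (convex_closedBall c₂ r₂).convexHull_eq,
    mem_convexJoin] at hx
  obtain ⟨a, ha, b, hb, p, q, hp, hq, hpq, rfl⟩ := hx
  rw [mem_closedBall, dist_eq_norm] at ha hb
  obtain rfl : p = 1 - q := by linarith
  refine ⟨q, ⟨hq, by linarith⟩, ?_⟩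
  rw [mem_closedBall, dist_eq_norm]
  calc ‖(1 - q) • a + q • b - (c₁ + q • (c₂ - c₁))‖
      = ‖(1 - q) • (a - c₁) + q • (b - c₂)‖ := by congr 1; module
    _ ≤ (1 - q) * ‖a - c₁‖ + q * ‖b - c₂‖ := by
      refine (norm_add_le _ _).trans_eq ?_
      rw [norm_smul_of_nonneg hp, norm_smul_of_nonneg hq]
    _ ≤ (1 - q) * r₁ + q * r₂ := by gcongr
    _ = r₁ + q * (r₂ - r₁) := by ring

theorem norm_sub_sq_sub_sq_eq_quadratic [InnerProductSpace ℝ E] (x c₁ c₂ : E)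
    (r₁ r₂ t : ℝ) :
    ‖x - (c₁ + t • (c₂ - c₁))‖ ^ 2 - (r₁ + t * (r₂ - r₁)) ^ 2 =
      (‖c₂ - c₁‖ ^ 2 - (r₂ - r₁) ^ 2) * t ^ 2
        + (-2 * inner ℝ (x - c₁) (c₂ - c₁) - 2 * r₁ * (r₂ - r₁)) * t
        + (‖x - c₁‖ ^ 2 - r₁ ^ 2) := by
  rw [show x - (c₁ + t • (c₂ - c₁)) = (x - c₁) - t • (c₂ - c₁) by abel, norm_sub_sq_real,
    real_inner_smul_right, norm_smul, Real.norm_eq_abs, mul_pow, sq_abs]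
  ring

theorem mem_closedBall_of_norm_sub_sq_le {x c : E} {r : ℝ} (hr : 0 ≤ r)
    (h : ‖x - c‖ ^ 2 ≤ r ^ 2) : x ∈ closedBall c r := by
  rwa [mem_closedBall, dist_eq_norm, ← pow_le_pow_iff_left₀ (norm_nonneg _) hr two_ne_zero]

end Capsule

/-- Theorem 1 (Spherical Forward Occupancy): the tapered capsule
co(B(c₁,r₁) ∪ B(c₂,r₂)) is covered by n_s spheres: the two end spheres
together with n_s − 2 intermediate spheres with equally spaced centers
c̄_{m+1} = c₁ + λ_m (c₂ − c₁), λ_m = (2m−1)/(2(n_s−2)), and radii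
r̄_{m+1} = √(ℓ_{m+1}² + s² − ((r₂−r₁)/(2(n_s−2)))²) where
ℓ_{m+1} = r₁ + λ_m (r₂ − r₁) and s = ‖c₂ − c₁‖/(2(n_s−2)). -/
theorem tapered_capsule_subset_sfo (c₁ c₂ : EuclideanSpace ℝ (Fin 3))
    (r₁ r₂ : ℝ) (hr₁ : 0 ≤ r₁) (hr₂ : 0 ≤ r₂)
    (hsep : |r₂ - r₁| ≤ ‖c₂ - c₁‖) (ns : ℕ) (hns : 3 ≤ ns) (s : ℝ)
    (hs : s = ‖c₂ - c₁‖ / (2 * ((ns : ℝ) - 2))) :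
    convexHull ℝ (Metric.closedBall c₁ r₁ ∪ Metric.closedBall c₂ r₂) ⊆
      Metric.closedBall c₁ r₁ ∪ Metric.closedBall c₂ r₂ ∪
        ⋃ m ∈ Finset.Icc 1 (ns - 2),
          Metric.closedBall
            (c₁ + ((2 * (m : ℝ) - 1) / (2 * ((ns : ℝ) - 2))) • (c₂ - c₁))
            (Real.sqrt ((r₁ + ((2 * (m : ℝ) - 1) / (2 * ((ns : ℝ) - 2))) * (r₂ - r₁)) ^ 2
              + s ^ 2 - ((r₂ - r₁) / (2 * ((ns : ℝ) - 2))) ^ 2)) := by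
  intro x hx
  obtain ⟨q, hq, hxq⟩ := exists_mem_closedBall_of_mem_convexHull_union hr₁ hr₂ hx
  rw [mem_closedBall, dist_eq_norm] at hxq
  have hA : 0 ≤ ‖c₂ - c₁‖ ^ 2 - (r₂ - r₁) ^ 2 := by
    simpa only [sq_abs, sub_nonneg] using pow_le_pow_left₀ (abs_nonneg _) hsep 2
  have hfq := sub_nonpos.mpr (pow_le_pow_left₀ (norm_nonneg _) hxq 2)
  have hcast : ((ns - 2 : ℕ) : ℝ) = (ns : ℝ) - 2 := by
    push_cast [Nat.cast_sub (by omega : 2 ≤ ns)]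
    ring
  rcases quadratic_nonpos_at_endpoint_or_le_at_midpoint
      (norm_sub_sq_sub_sq_eq_quadratic x c₁ c₂ r₁ r₂) hA hq hfq (by omega : 0 < ns - 2)
    with h₀ | h₁ | ⟨m, hm, hmid⟩
  · left; left
    exact mem_closedBall_of_norm_sub_sq_le hr₁ (by simpa using h₀)
  · left; right
    exact mem_closedBall_of_norm_sub_sq_le hr₂ (by simpa using h₁)
  · right
    refine mem_biUnion hm ?_
    have hradius : s ^ 2 - ((r₂ - r₁) / (2 * ((ns : ℝ) - 2))) ^ 2
        = (‖c₂ - c₁‖ ^ 2 - (r₂ - r₁) ^ 2) * (1 / (2 * ((ns : ℝ) - 2))) ^ 2 := by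
      rw [hs]; ring
    rw [hcast] at hmid
    rw [mem_closedBall, dist_eq_norm]
    exact Real.le_sqrt_of_sq_le (by linarith)
end
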